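/- arXiv:math/0307130 — 2 statements merged into one kernel-verified Lean document; each statement's English description precedes it below -/
import Mathlib

section
/- Let n be a positive integer and let x, y_1, …, y_n be vectors in H. Then ∑_{i=1}^n |(x, y_i)|^2 ≤ ‖x‖^2 · max_{1≤i≤n} (∑_{j=1}^n |(y_i, y_j)|). (Bombieri's inequality.) -/
/-!
Bombieri's inequality is the dual of the bound `‖∑ cᵢ yᵢ‖² ≤ M ∑ |cᵢ|²`, where `M` bounds the row
sums of `|(yᵢ, yⱼ)|`; that bound follows from expanding the square and the Schur test
`|cᵢ||cⱼ| ≤ (|cᵢ|² + |cⱼ|²)/2` for the symmetric kernel `|(yᵢ, yⱼ)|`. Testing `x` against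
`z = ∑ conj (x, yᵢ) yᵢ` gives `S := ∑ |(x, yᵢ)|² = (x, z) ≤ ‖x‖ ‖z‖ ≤ ‖x‖ √(S M)`.
-/

open Finset RCLike ComplexConjugate

section SchurTest

variable {ι : Type*} [Fintype ι]

theorem sum_sum_mul_mul_le_sum_sq_mul_of_symm (a : ι → ℝ) {b : ι → ι → ℝ}
    (hb : ∀ i j, 0 ≤ b i j) (hb_symm : ∀ i j, b i j = b j i) {M : ℝ} (hM : ∀ i, ∑ j, b i j ≤ M) :
    ∑ i, ∑ j, a i * a j * b i j ≤ (∑ i, a i ^ 2) * M := by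
  have swap : ∑ i, ∑ j, a j ^ 2 * b i j = ∑ i, ∑ j, a i ^ 2 * b i j := by
    rw [Finset.sum_comm]
    simp only [hb_symm]
  calc ∑ i, ∑ j, a i * a j * b i j
      ≤ ∑ i, ∑ j, (a i ^ 2 + a j ^ 2) / 2 * b i j := by
        gcongr with i _ j _
        · exact hb i j
        · nlinarith [sq_nonneg (a i - a j)]
    _ = (∑ i, ∑ j, a i ^ 2 * b i j + ∑ i, ∑ j, a j ^ 2 * b i j) / 2 := by
        rw [← sum_add_distrib, sum_div]
        refine sum_congr rfl fun i _ => ?_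
        rw [← sum_add_distrib, sum_div]
        exact sum_congr rfl fun j _ => by ring
    _ = ∑ i, a i ^ 2 * ∑ j, b i j := by
        rw [swap, add_self_div_two]
        simp only [mul_sum]
    _ ≤ ∑ i, a i ^ 2 * M := by
        gcongr with i _
        exact hM i
    _ = (∑ i, a i ^ 2) * M := sum_mul .. |>.symm

end SchurTest

section Bombieri

variable {𝕜 E ι : Type*} [RCLike 𝕜] [NormedAddCommGroup E] [InnerProductSpace 𝕜 E] [Fintype ι]

local notation "⟪" x ", " y "⟫" => inner 𝕜 x y

theorem norm_sum_smul_sq_le (c : ι → 𝕜) (y : ι → E) :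
    ‖∑ i, c i • y i‖ ^ 2 ≤ ∑ i, ∑ j, ‖c i‖ * ‖c j‖ * ‖⟪y i, y j⟫‖ := by
  have expand : ⟪∑ i, c i • y i, ∑ i, c i • y i⟫ =
      ∑ i, ∑ j, conj (c i) * c j * ⟪y i, y j⟫ := by
    rw [sum_inner]
    refine sum_congr rfl fun i _ => ?_
    rw [inner_smul_left, inner_sum, mul_sum]
    simp only [inner_smul_right, mul_assoc]
  calc ‖∑ i, c i • y i‖ ^ 2 = re ⟪∑ i, c i • y i, ∑ i, c i • y i⟫ := norm_sq_eq_re_inner _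
    _ ≤ ‖⟪∑ i, c i • y i, ∑ i, c i • y i⟫‖ := re_le_norm _
    _ ≤ ∑ i, ∑ j, ‖conj (c i) * c j * ⟪y i, y j⟫‖ := by
        rw [expand]
        exact (norm_sum_le _ _).trans (sum_le_sum fun i _ => norm_sum_le _ _)
    _ = ∑ i, ∑ j, ‖c i‖ * ‖c j‖ * ‖⟪y i, y j⟫‖ := by
        simp only [norm_mul, norm_conj]

theorem norm_sum_smul_sq_le_of_sum_norm_inner_le (c : ι → 𝕜) (y : ι → E) {M : ℝ}
    (hM : ∀ i, ∑ j, ‖⟪y i, y j⟫‖ ≤ M) :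
    ‖∑ i, c i • y i‖ ^ 2 ≤ (∑ i, ‖c i‖ ^ 2) * M :=
  (norm_sum_smul_sq_le c y).trans <|
    sum_sum_mul_mul_le_sum_sq_mul_of_symm _ (fun _ _ => norm_nonneg _)
      (fun _ _ => norm_inner_symm _ _) hM

theorem sum_norm_inner_sq_le [Nonempty ι] (x : E) (y : ι → E) {M : ℝ}
    (hM : ∀ i, ∑ j, ‖⟪y i, y j⟫‖ ≤ M) :
    ∑ i, ‖⟪x, y i⟫‖ ^ 2 ≤ ‖x‖ ^ 2 * M := by
  set S := ∑ i, ‖⟪x, y i⟫‖ ^ 2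
  set z := ∑ i, conj ⟪x, y i⟫ • y i
  have hM0 : 0 ≤ M := by
    obtain ⟨i⟩ := ‹Nonempty ι›
    exact (sum_nonneg fun _ _ => norm_nonneg _).trans (hM i)
  have hS_eq : re ⟪x, z⟫ = S := by
    simp only [z, S, inner_sum, inner_smul_right, RCLike.conj_mul, map_sum, ← ofReal_pow,
      ofReal_re]
  have hz : ‖z‖ ^ 2 ≤ S * M := by
    simpa only [z, norm_conj] using
      norm_sum_smul_sq_le_of_sum_norm_inner_le (fun i => conj ⟪x, y i⟫) y hM
  have hS : S ≤ ‖x‖ * ‖z‖ := hS_eq ▸ re_inner_le_norm x z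
  have hS0 : 0 ≤ S := sum_nonneg fun _ _ => sq_nonneg _
  rcases hS0.eq_or_lt with hS_zero | hSpos
  · rw [← hS_zero]; positivity
  refine le_of_mul_le_mul_right ?_ hSpos
  calc S * S ≤ ‖x‖ ^ 2 * ‖z‖ ^ 2 := by nlinarith
    _ ≤ ‖x‖ ^ 2 * (S * M) := by gcongr
    _ = ‖x‖ ^ 2 * M * S := by ring

end Bombieri

theorem stmt_2 {H : Type*} [NormedAddCommGroup H] [InnerProductSpace ℂ H]
    {n : ℕ} (hn : 0 < n) (x : H) (y : Fin n → H) :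
    (∑ i, ‖(inner ℂ x (y i) : ℂ)‖ ^ 2) ≤ ‖x‖ ^ 2 * (Finset.univ.sup' (Finset.univ_nonempty_iff.mpr (Fin.pos_iff_nonempty.mp hn)) (fun i => (∑ j, ‖(inner ℂ (y i) (y j) : ℂ)‖))) := by
  have : Nonempty (Fin n) := Fin.pos_iff_nonempty.mp hn
  exact sum_norm_inner_sq_le x y fun i =>
    le_sup' (fun i => ∑ j, ‖(inner ℂ (y i) (y j) : ℂ)‖) (mem_univ i)
end

section
/- Let n be a positive integer, let z_1, …, z_n be vectors in H, and let α_1, …, α_n be complex numbers. Then ‖∑_{i=1}^n α_i z_i‖^2 ≤ ∑_{i=1}^n |α_i|^2 (∑_{j=1}^n |(z_i, z_j)|). -/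
/-!
Expand `‖∑ aᵢ zᵢ‖² = ∑ᵢ ∑ⱼ conj aᵢ aⱼ ⟪zᵢ, zⱼ⟫` and bound it termwise by
`∑ᵢ ∑ⱼ |aᵢ| |aⱼ| |⟪zᵢ, zⱼ⟫|`. Then `2 |aᵢ| |aⱼ| ≤ |aᵢ|² + |aⱼ|²`, and since the weights
`|⟪zᵢ, zⱼ⟫|` are symmetric in `i, j` both halves of the resulting sum agree.
-/

open Finset RCLike
open scoped ComplexConjugate

theorem sum_sum_mul_mul_le_sum_sq_mul_sum {ι : Type*} [Fintype ι] (b : ι → ℝ)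
    (c : ι → ι → ℝ) (hc_nonneg : ∀ i j, 0 ≤ c i j) (hc_symm : ∀ i j, c i j = c j i) :
    ∑ i, ∑ j, b i * b j * c i j ≤ ∑ i, b i ^ 2 * ∑ j, c i j := by
  have h_amgm : ∀ i j, 2 * (b i * b j * c i j) ≤ b i ^ 2 * c i j + b j ^ 2 * c i j :=
    fun i j => by nlinarith [mul_nonneg (sq_nonneg (b i - b j)) (hc_nonneg i j)]
  have h_swap : ∑ i, ∑ j, b j ^ 2 * c i j = ∑ i, ∑ j, b i ^ 2 * c i j := by
    rw [sum_comm]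
    simp_rw [hc_symm]
  suffices 2 * ∑ i, ∑ j, b i * b j * c i j ≤ 2 * ∑ i, b i ^ 2 * ∑ j, c i j by linarith
  calc 2 * ∑ i, ∑ j, b i * b j * c i j
      ≤ ∑ i, ∑ j, (b i ^ 2 * c i j + b j ^ 2 * c i j) := by
        rw [mul_sum]
        exact sum_le_sum fun i _ => by rw [mul_sum]; exact sum_le_sum fun j _ => h_amgm i j
    _ = 2 * ∑ i, b i ^ 2 * ∑ j, c i j := by
        simp_rw [sum_add_distrib, h_swap, ← two_mul, mul_sum]

theorem norm_sum_smul_sq_le_s10 {𝕜 E ι : Type*} [RCLike 𝕜] [NormedAddCommGroup E]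
    [InnerProductSpace 𝕜 E] [Fintype ι] (a : ι → 𝕜) (z : ι → E) :
    ‖∑ i, a i • z i‖ ^ 2 ≤ ∑ i, ∑ j, ‖a i‖ * ‖a j‖ * ‖(inner 𝕜 (z i) (z j) : 𝕜)‖ := by
  have h_expand : (inner 𝕜 (∑ i, a i • z i) (∑ j, a j • z j) : 𝕜) =
      ∑ i, ∑ j, conj (a i) * a j * inner 𝕜 (z i) (z j) := by
    simp_rw [sum_inner, inner_sum, inner_smul_left, inner_smul_right, mul_assoc]
  calc ‖∑ i, a i • z i‖ ^ 2 = re (inner 𝕜 (∑ i, a i • z i) (∑ j, a j • z j) : 𝕜) :=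
        norm_sq_eq_re_inner _
    _ ≤ ‖(inner 𝕜 (∑ i, a i • z i) (∑ j, a j • z j) : 𝕜)‖ := re_le_norm _
    _ ≤ ∑ i, ∑ j, ‖conj (a i) * a j * inner 𝕜 (z i) (z j)‖ := by
        rw [h_expand]
        exact (norm_sum_le _ _).trans (sum_le_sum fun i _ => norm_sum_le _ _)
    _ = ∑ i, ∑ j, ‖a i‖ * ‖a j‖ * ‖(inner 𝕜 (z i) (z j) : 𝕜)‖ := by
        simp only [norm_mul, RCLike.norm_conj]

theorem stmt_10_general {H : Type*} [NormedAddCommGroup H] [InnerProductSpace ℂ H]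
    {n : ℕ} (z : Fin n → H) (a : Fin n → ℂ) :
    ‖∑ i, a i • z i‖ ^ 2 ≤ (∑ i, (‖a i‖) ^ 2 * (∑ j, ‖(inner ℂ (z i) (z j) : ℂ)‖)) :=
  (norm_sum_smul_sq_le_s10 a z).trans <|
    sum_sum_mul_mul_le_sum_sq_mul_sum _ _ (fun _ _ => norm_nonneg _) fun _ _ => norm_inner_symm _ _

theorem stmt_10 {H : Type*} [NormedAddCommGroup H] [InnerProductSpace ℂ H]
    {n : ℕ} (hn : 0 < n) (z : Fin n → H) (a : Fin n → ℂ) :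
    ‖∑ i, a i • z i‖ ^ 2 ≤ (∑ i, (‖a i‖) ^ 2 * (∑ j, ‖(inner ℂ (z i) (z j) : ℂ)‖)) :=
  stmt_10_general z a
end
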